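/- Let C : H → H be μ-Lipschitz continuous for μ > 0, and on K = H ⊕ X ⊕ Y ⊕ G ⊕ G ⊕ G define S(x, p, q, z, y, v) = (Σ_{i=1}^m L_i* v_i, −K₁z₁,…,−K_m z_m, −M₁y₁,…,−M_m y_m, K₁*p₁,…,K_m*p_m, M₁*q₁,…,M_m*q_m, −L₁x,…,−L_m x) and Q(x, p, q, z, y, v) = (Cx, 0, 0, 0, 0, 0). Then S + Q is Lipschitz continuous on K with constant β = μ + √(max{ Σ_{i=1}^m ‖L_i‖², max_{j=1,…,m} ‖K_j‖², max_{j=1,…,m} ‖M_j‖² }): for all u, w ∈ K, ‖(S+Q)u − (S+Q)w‖_K ≤ β ‖u − w‖_K. -/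
import Mathlib


open scoped RealInnerProductSpace
open Filter Topology

noncomputable section

variable {m : ℕ}
  {H : Type*} [NormedAddCommGroup H] [InnerProductSpace ℝ H] [CompleteSpace H]
  {G : Fin m → Type*} [∀ i, NormedAddCommGroup (G i)] [∀ i, InnerProductSpace ℝ (G i)]
  [∀ i, CompleteSpace (G i)]
  {X : Fin m → Type*} [∀ i, NormedAddCommGroup (X i)] [∀ i, InnerProductSpace ℝ (X i)]
  [∀ i, CompleteSpace (X i)]
  {Y : Fin m → Type*} [∀ i, NormedAddCommGroup (Y i)] [∀ i, InnerProductSpace ℝ (Y i)]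
  [∀ i, CompleteSpace (Y i)]

/-- the inner product of the Hilbert direct sum `K = H ⊕ X ⊕ Y ⊕ G ⊕ G ⊕ G` -/
def kinner (u w : H × (∀ i, X i) × (∀ i, Y i) × (∀ i, G i) × (∀ i, G i) × (∀ i, G i)) : ℝ :=
  ⟪u.1, w.1⟫ + (∑ i, ⟪u.2.1 i, w.2.1 i⟫) + (∑ i, ⟪u.2.2.1 i, w.2.2.1 i⟫) +
    (∑ i, ⟪u.2.2.2.1 i, w.2.2.2.1 i⟫) + (∑ i, ⟪u.2.2.2.2.1 i, w.2.2.2.2.1 i⟫) +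
    (∑ i, ⟪u.2.2.2.2.2 i, w.2.2.2.2.2 i⟫)

/-- the skew operator `S` -/
def Sop (L : ∀ i, H →L[ℝ] G i) (K : ∀ i, G i →L[ℝ] X i) (M : ∀ i, G i →L[ℝ] Y i)
    (u : H × (∀ i, X i) × (∀ i, Y i) × (∀ i, G i) × (∀ i, G i) × (∀ i, G i)) :
    H × (∀ i, X i) × (∀ i, Y i) × (∀ i, G i) × (∀ i, G i) × (∀ i, G i) :=
  ⟨∑ i, ContinuousLinearMap.adjoint (L i) (u.2.2.2.2.2 i),
   fun i => -(K i (u.2.2.2.1 i)),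
   fun i => -(M i (u.2.2.2.2.1 i)),
   fun i => ContinuousLinearMap.adjoint (K i) (u.2.1 i),
   fun i => ContinuousLinearMap.adjoint (M i) (u.2.2.1 i),
   fun i => -(L i u.1)⟩

/-- the operator `Q` -/
def Qop (C : H → H)
    (u : H × (∀ i, X i) × (∀ i, Y i) × (∀ i, G i) × (∀ i, G i) × (∀ i, G i)) :
    H × (∀ i, X i) × (∀ i, Y i) × (∀ i, G i) × (∀ i, G i) × (∀ i, G i) :=
  ⟨C u.1, 0, 0, 0, 0, 0⟩

theorem sqrt_add_sq_le' {A e R : ℝ} (hA : 0 ≤ A) (he : 0 ≤ e) (hR : 0 ≤ R) :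
    Real.sqrt ((A + e)^2 + R) ≤ Real.sqrt (A^2 + R) + e := by
  have h2 : Real.sqrt (A^2+R) ^ 2 = A^2 + R := Real.sq_sqrt (by positivity)
  have hA1 : A ≤ Real.sqrt (A^2+R) := by
    nlinarith [Real.sqrt_nonneg (A^2+R)]
  have h1 : (A+e)^2 + R ≤ (Real.sqrt (A^2+R) + e)^2 := by
    nlinarith [Real.sqrt_nonneg (A^2+R)]
  calc Real.sqrt ((A+e)^2+R) ≤ Real.sqrt ((Real.sqrt (A^2+R) + e)^2) := Real.sqrt_le_sqrt h1
    _ = _ := Real.sqrt_sq (by positivity)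

set_option maxHeartbeats 1000000 in
theorem stmt9
    (L : ∀ i, H →L[ℝ] G i) (hL : ∀ i, L i ≠ 0)
    (K : ∀ i, G i →L[ℝ] X i) (hK : ∀ i, K i ≠ 0)
    (M : ∀ i, G i →L[ℝ] Y i) (hM : ∀ i, M i ≠ 0)
    (μ : ℝ) (hμ : 0 < μ)
    (C : H → H) (hClip : ∀ x y : H, ‖C x - C y‖ ≤ μ * ‖x - y‖)
    (β : ℝ)
    (hβ : ∃ s : ℝ, IsGreatest ({∑ i, ‖L i‖ ^ 2} ∪ Set.range (fun j => ‖K j‖ ^ 2) ∪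
        Set.range (fun j => ‖M j‖ ^ 2)) s ∧ β = μ + Real.sqrt s) :
    ∀ u w : H × (∀ i, X i) × (∀ i, Y i) × (∀ i, G i) × (∀ i, G i) × (∀ i, G i),
      Real.sqrt (kinner ((Sop L K M u + Qop C u) - (Sop L K M w + Qop C w))
          ((Sop L K M u + Qop C u) - (Sop L K M w + Qop C w))) ≤
        β * Real.sqrt (kinner (u - w) (u - w)) := by
  obtain ⟨s, ⟨hsmem, hsub⟩, hβ⟩ := hβ
  have hsL : ∑ i, ‖L i‖ ^ 2 ≤ s := hsub (by left; left; rfl)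
  have hsK : ∀ j, ‖K j‖ ^ 2 ≤ s := fun j => hsub (Or.inl (Or.inr ⟨j, rfl⟩))
  have hsM : ∀ j, ‖M j‖ ^ 2 ≤ s := fun j => hsub (Or.inr ⟨j, rfl⟩)
  have hs0 : 0 ≤ s := le_trans (Finset.sum_nonneg fun i _ => sq_nonneg _) hsL
  intro u w
  set a : H × (∀ i, X i) × (∀ i, Y i) × (∀ i, G i) × (∀ i, G i) × (∀ i, G i) := u - w with ha
  set c : H := C u.1 - C w.1 with hc
  have key : (Sop L K M u + Qop C u) - (Sop L K M w + Qop C w) =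
      Sop L K M a + (⟨c, 0, 0, 0, 0, 0⟩ :
        H × (∀ i, X i) × (∀ i, Y i) × (∀ i, G i) × (∀ i, G i) × (∀ i, G i)) := by
    refine Prod.ext ?_ (Prod.ext ?_ (Prod.ext ?_ (Prod.ext ?_ (Prod.ext ?_ ?_))))
    · show (_ + C u.1) - (_ + C w.1) = _ + c
      simp only [Sop, ha, hc, Prod.snd_sub, Pi.sub_apply, map_sub, Finset.sum_sub_distrib]
      abel
    · funext i
      show (-(K i (u.2.2.2.1 i)) + 0) - (-(K i (w.2.2.2.1 i)) + 0) = -(K i (a.2.2.2.1 i)) + 0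
      simp only [ha, Prod.fst_sub, Prod.snd_sub, Pi.sub_apply, map_sub]
      abel
    · funext i
      show (-(M i (u.2.2.2.2.1 i)) + 0) - (-(M i (w.2.2.2.2.1 i)) + 0)
          = -(M i (a.2.2.2.2.1 i)) + 0
      simp only [ha, Prod.fst_sub, Prod.snd_sub, Pi.sub_apply, map_sub]
      abel
    · funext i
      show (ContinuousLinearMap.adjoint (K i) (u.2.1 i) + 0)
          - (ContinuousLinearMap.adjoint (K i) (w.2.1 i) + 0)
          = ContinuousLinearMap.adjoint (K i) (a.2.1 i) + 0
      simp only [ha, Prod.fst_sub, Prod.snd_sub, Pi.sub_apply, map_sub]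
      abel
    · funext i
      show (ContinuousLinearMap.adjoint (M i) (u.2.2.1 i) + 0)
          - (ContinuousLinearMap.adjoint (M i) (w.2.2.1 i) + 0)
          = ContinuousLinearMap.adjoint (M i) (a.2.2.1 i) + 0
      simp only [ha, Prod.fst_sub, Prod.snd_sub, Pi.sub_apply, map_sub]
      abel
    · funext i
      show (-(L i u.1) + 0) - (-(L i w.1) + 0) = -(L i a.1) + 0
      simp only [ha, Prod.fst_sub, map_sub]
      abel
  rw [key]
  set A : ℝ := ‖∑ i, ContinuousLinearMap.adjoint (L i) (a.2.2.2.2.2 i)‖ with hA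
  set R : ℝ := (∑ i, ‖K i (a.2.2.2.1 i)‖^2) + (∑ i, ‖M i (a.2.2.2.2.1 i)‖^2)
      + (∑ i, ‖ContinuousLinearMap.adjoint (K i) (a.2.1 i)‖^2)
      + (∑ i, ‖ContinuousLinearMap.adjoint (M i) (a.2.2.1 i)‖^2)
      + (∑ i, ‖L i a.1‖^2) with hR
  set T : ℝ := kinner a a with hT
  have hTeq : T = ‖a.1‖^2 + (∑ i, ‖a.2.1 i‖^2) + (∑ i, ‖a.2.2.1 i‖^2)
      + (∑ i, ‖a.2.2.2.1 i‖^2) + (∑ i, ‖a.2.2.2.2.1 i‖^2) + (∑ i, ‖a.2.2.2.2.2 i‖^2) := by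
    simp [hT, kinner, real_inner_self_eq_norm_sq]
  have hT0 : 0 ≤ T := by rw [hTeq]; positivity
  have hR0 : 0 ≤ R := by rw [hR]; positivity
  have hdd : kinner (Sop L K M a + (⟨c, 0, 0, 0, 0, 0⟩ : H × (∀ i, X i) × (∀ i, Y i) ×
        (∀ i, G i) × (∀ i, G i) × (∀ i, G i)))
      (Sop L K M a + (⟨c, 0, 0, 0, 0, 0⟩ : H × (∀ i, X i) × (∀ i, Y i) ×
        (∀ i, G i) × (∀ i, G i) × (∀ i, G i)))
      = ‖(∑ i, ContinuousLinearMap.adjoint (L i) (a.2.2.2.2.2 i)) + c‖^2 + R := by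
    rw [hR]
    simp only [kinner, Sop, Prod.fst_add, Prod.snd_add, Pi.add_apply, Pi.zero_apply, add_zero,
      inner_neg_neg, real_inner_self_eq_norm_sq]
    ring
  -- bound for the adjoint-sum term
  have hA1 : A ≤ ∑ i, ‖L i‖ * ‖a.2.2.2.2.2 i‖ := by
    refine le_trans (norm_sum_le _ _) (Finset.sum_le_sum fun i _ => ?_)
    calc ‖ContinuousLinearMap.adjoint (L i) (a.2.2.2.2.2 i)‖
        ≤ ‖ContinuousLinearMap.adjoint (L i)‖ * ‖a.2.2.2.2.2 i‖ :=
          (ContinuousLinearMap.adjoint (L i)).le_opNorm _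
      _ = ‖L i‖ * ‖a.2.2.2.2.2 i‖ := by
          rw [LinearIsometryEquiv.norm_map ContinuousLinearMap.adjoint (L i)]
  have hA0 : 0 ≤ A := norm_nonneg _
  have hA2 : A^2 ≤ s * ∑ i, ‖a.2.2.2.2.2 i‖^2 := by
    calc A^2 ≤ (∑ i, ‖L i‖ * ‖a.2.2.2.2.2 i‖)^2 := pow_le_pow_left₀ hA0 hA1 2
      _ ≤ (∑ i, ‖L i‖^2) * ∑ i, ‖a.2.2.2.2.2 i‖^2 := Finset.sum_mul_sq_le_sq_mul_sq _ _ _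
      _ ≤ s * ∑ i, ‖a.2.2.2.2.2 i‖^2 := by
          apply mul_le_mul_of_nonneg_right hsL
          positivity
  have hKz : ∀ i, ‖K i (a.2.2.2.1 i)‖^2 ≤ s * ‖a.2.2.2.1 i‖^2 := fun i => by
    calc ‖K i (a.2.2.2.1 i)‖^2 ≤ (‖K i‖ * ‖a.2.2.2.1 i‖)^2 :=
          pow_le_pow_left₀ (norm_nonneg _) ((K i).le_opNorm _) 2
      _ = ‖K i‖^2 * ‖a.2.2.2.1 i‖^2 := by ring
      _ ≤ s * ‖a.2.2.2.1 i‖^2 := mul_le_mul_of_nonneg_right (hsK i) (by positivity)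
  have hMy : ∀ i, ‖M i (a.2.2.2.2.1 i)‖^2 ≤ s * ‖a.2.2.2.2.1 i‖^2 := fun i => by
    calc ‖M i (a.2.2.2.2.1 i)‖^2 ≤ (‖M i‖ * ‖a.2.2.2.2.1 i‖)^2 :=
          pow_le_pow_left₀ (norm_nonneg _) ((M i).le_opNorm _) 2
      _ = ‖M i‖^2 * ‖a.2.2.2.2.1 i‖^2 := by ring
      _ ≤ s * ‖a.2.2.2.2.1 i‖^2 := mul_le_mul_of_nonneg_right (hsM i) (by positivity)
  have hKp : ∀ i, ‖ContinuousLinearMap.adjoint (K i) (a.2.1 i)‖^2 ≤ s * ‖a.2.1 i‖^2 := fun i => by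
    have hn : ‖ContinuousLinearMap.adjoint (K i)‖ = ‖K i‖ :=
      LinearIsometryEquiv.norm_map ContinuousLinearMap.adjoint (K i)
    calc ‖ContinuousLinearMap.adjoint (K i) (a.2.1 i)‖^2 ≤ (‖K i‖ * ‖a.2.1 i‖)^2 := by
          refine pow_le_pow_left₀ (norm_nonneg _) ?_ 2
          rw [← hn]; exact (ContinuousLinearMap.adjoint (K i)).le_opNorm _
      _ = ‖K i‖^2 * ‖a.2.1 i‖^2 := by ring
      _ ≤ s * ‖a.2.1 i‖^2 := mul_le_mul_of_nonneg_right (hsK i) (by positivity)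
  have hMq : ∀ i, ‖ContinuousLinearMap.adjoint (M i) (a.2.2.1 i)‖^2 ≤ s * ‖a.2.2.1 i‖^2 :=
    fun i => by
    have hn : ‖ContinuousLinearMap.adjoint (M i)‖ = ‖M i‖ :=
      LinearIsometryEquiv.norm_map ContinuousLinearMap.adjoint (M i)
    calc ‖ContinuousLinearMap.adjoint (M i) (a.2.2.1 i)‖^2 ≤ (‖M i‖ * ‖a.2.2.1 i‖)^2 := by
          refine pow_le_pow_left₀ (norm_nonneg _) ?_ 2
          rw [← hn]; exact (ContinuousLinearMap.adjoint (M i)).le_opNorm _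
      _ = ‖M i‖^2 * ‖a.2.2.1 i‖^2 := by ring
      _ ≤ s * ‖a.2.2.1 i‖^2 := mul_le_mul_of_nonneg_right (hsM i) (by positivity)
  have hLx : ∑ i, ‖L i a.1‖^2 ≤ s * ‖a.1‖^2 := by
    calc ∑ i, ‖L i a.1‖^2 ≤ ∑ i, ‖L i‖^2 * ‖a.1‖^2 := Finset.sum_le_sum fun i _ => by
          calc ‖L i a.1‖^2 ≤ (‖L i‖ * ‖a.1‖)^2 :=
                pow_le_pow_left₀ (norm_nonneg _) ((L i).le_opNorm _) 2
            _ = ‖L i‖^2 * ‖a.1‖^2 := by ring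
      _ = (∑ i, ‖L i‖^2) * ‖a.1‖^2 := by rw [Finset.sum_mul]
      _ ≤ s * ‖a.1‖^2 := mul_le_mul_of_nonneg_right hsL (by positivity)
  have hSa : A^2 + R ≤ s * T := by
    have h1 : ∑ i, ‖K i (a.2.2.2.1 i)‖^2 ≤ s * ∑ i, ‖a.2.2.2.1 i‖^2 := by
      rw [Finset.mul_sum]; exact Finset.sum_le_sum fun i _ => hKz i
    have h2 : ∑ i, ‖M i (a.2.2.2.2.1 i)‖^2 ≤ s * ∑ i, ‖a.2.2.2.2.1 i‖^2 := by
      rw [Finset.mul_sum]; exact Finset.sum_le_sum fun i _ => hMy i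
    have h3 : ∑ i, ‖ContinuousLinearMap.adjoint (K i) (a.2.1 i)‖^2
        ≤ s * ∑ i, ‖a.2.1 i‖^2 := by
      rw [Finset.mul_sum]; exact Finset.sum_le_sum fun i _ => hKp i
    have h4 : ∑ i, ‖ContinuousLinearMap.adjoint (M i) (a.2.2.1 i)‖^2
        ≤ s * ∑ i, ‖a.2.2.1 i‖^2 := by
      rw [Finset.mul_sum]; exact Finset.sum_le_sum fun i _ => hMq i
    rw [hR, hTeq]
    nlinarith [hA2, h1, h2, h3, h4, hLx]
  have hcle : ‖c‖ ≤ μ * Real.sqrt T := by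
    have h1 : ‖c‖ ≤ μ * ‖a.1‖ := by
      have h := hClip u.1 w.1
      rw [hc, ha]
      exact h
    refine le_trans h1 (mul_le_mul_of_nonneg_left ?_ hμ.le)
    rw [show ‖a.1‖ = Real.sqrt (‖a.1‖^2) from (Real.sqrt_sq (norm_nonneg _)).symm]
    apply Real.sqrt_le_sqrt
    rw [hTeq]
    have : (0:ℝ) ≤ (∑ i, ‖a.2.1 i‖^2) + (∑ i, ‖a.2.2.1 i‖^2) + (∑ i, ‖a.2.2.2.1 i‖^2)
        + (∑ i, ‖a.2.2.2.2.1 i‖^2) + (∑ i, ‖a.2.2.2.2.2 i‖^2) := by positivity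
    linarith
  have step1 : Real.sqrt (‖(∑ i, ContinuousLinearMap.adjoint (L i) (a.2.2.2.2.2 i)) + c‖^2 + R)
      ≤ Real.sqrt ((A + ‖c‖)^2 + R) := by
    apply Real.sqrt_le_sqrt
    have htri : ‖(∑ i, ContinuousLinearMap.adjoint (L i) (a.2.2.2.2.2 i)) + c‖ ≤ A + ‖c‖ :=
      norm_add_le _ _
    have h0 : (0:ℝ) ≤ ‖(∑ i, ContinuousLinearMap.adjoint (L i) (a.2.2.2.2.2 i)) + c‖ :=
      norm_nonneg _
    nlinarith
  have step2 : Real.sqrt ((A + ‖c‖)^2 + R) ≤ Real.sqrt (A^2 + R) + ‖c‖ :=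
    sqrt_add_sq_le' hA0 (norm_nonneg _) hR0
  have step3 : Real.sqrt (A^2 + R) ≤ Real.sqrt s * Real.sqrt T := by
    rw [← Real.sqrt_mul hs0]
    exact Real.sqrt_le_sqrt hSa
  rw [hdd]
  calc Real.sqrt (‖(∑ i, ContinuousLinearMap.adjoint (L i) (a.2.2.2.2.2 i)) + c‖^2 + R)
      ≤ Real.sqrt ((A + ‖c‖)^2 + R) := step1
    _ ≤ Real.sqrt (A^2 + R) + ‖c‖ := step2
    _ ≤ Real.sqrt s * Real.sqrt T + μ * Real.sqrt T := add_le_add step3 hcle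
    _ = β * Real.sqrt T := by rw [hβ]; ring
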